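/- For system (1.4), the rotation determinant with respect to β satisfies the identity P·∂Q/∂β - Q·∂P/∂β = x²y(y(δ+μy) - x(1-λx)) for all x, y. -/

import Mathlib

/-! Both `P` and `Q` are affine in `β`, and for affine families `P = p₁ β + p₀`, `Q = q₁ β + q₀`
the rotation determinant `P Q' - Q P'` equals `p₀ q₁ - q₀ p₁`, independently of `β`. -/

section AffineFamily

variable {𝕜 : Type*} [NontriviallyNormedField 𝕜]

theorem rotation_determinant_of_affine (p₁ p₀ q₁ q₀ b : 𝕜) :
    (p₁ * b + p₀) * deriv (fun b => q₁ * b + q₀) b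
      - (q₁ * b + q₀) * deriv (fun b => p₁ * b + p₀) b = p₀ * q₁ - q₀ * p₁ := by
  simp only [deriv_add_const', deriv_const_mul_id']
  ring

end AffineFamily

/-- The rotation determinant of system (1.4) with respect to β:
P·∂Q/∂β - Q·∂P/∂β = x²y(y(δ+μy) - x(1-λx)). -/
theorem rotation_determinant_beta (α δ lam μ : ℝ) (β : ℝ)
    (P : ℝ → ℝ → ℝ → ℝ) (Q : ℝ → ℝ → ℝ → ℝ)
    (hP : ∀ b x y, P b x y = x * ((1 - lam * x) * (α * x ^ 2 + b * x + 1) - y))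
    (hQ : ∀ b x y, Q b x y = -y * ((δ + μ * y) * (α * x ^ 2 + b * x + 1) - x)) :
    ∀ x y : ℝ,
      P β x y * deriv (fun b => Q b x y) β - Q β x y * deriv (fun b => P b x y) β =
        x ^ 2 * y * (y * (δ + μ * y) - x * (1 - lam * x)) := by
  intro x y
  have hP_affine : ∀ b, P b x y =
      x * (1 - lam * x) * x * b + x * ((1 - lam * x) * (α * x ^ 2 + 1) - y) := by
    intro b; rw [hP]; ring
  have hQ_affine : ∀ b, Q b x y =
      -y * (δ + μ * y) * x * b + -y * ((δ + μ * y) * (α * x ^ 2 + 1) - x) := by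
    intro b; rw [hQ]; ring
  simp only [hP_affine, hQ_affine]
  rw [rotation_determinant_of_affine]
  ring
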